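/- Let A be a real N×k matrix with AᵀA invertible, and let Q = A Aᵀ. Then for every j ∈ {1,…,N}: ∑_{J ⊆ {1,…,N}, |J| = k, j ∈ J} det(Q_J) = det(AᵀA) · [A (AᵀA)⁻¹ Aᵀ]_{jj}. Equivalently, the singleton marginal of the k-DPP with kernel Q at item j equals the j-th diagonal entry of the orthogonal projection onto the column space of A. -/

import Mathlib

open Matrix BigOperators

/-- Principal submatrix determinant: `det([Q_{ij}]_{i,j ∈ J})`, with `det(Q_∅) = 1`. -/
noncomputable def pdet {N : ℕ} (Q : Matrix (Fin N) (Fin N) ℝ) (J : Finset (Fin N)) : ℝ :=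
  (Q.submatrix (fun i : J => (i : Fin N)) (fun j : J => (j : Fin N))).det

/-- determinant of the square row-submatrix of `A` given by a `k`-element set `J`. -/
noncomputable def sdet {N k : ℕ} (A : Matrix (Fin N) (Fin k) ℝ) (J : Finset (Fin N)) : ℝ :=
  if h : J.card = k then (A.submatrix (fun p => J.orderEmbOfFin h p) id).det else 0

lemma stepA {N k : ℕ} (A : Matrix (Fin N) (Fin k) ℝ) (w : Fin N → ℝ) :
    (Aᵀ * Matrix.diagonal w * A).det
      = ∑ r : Fin k → Fin N, (∏ p, w (r p) * A (r p) p) * (A.submatrix r id).det := by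
  have hrow : (Aᵀ * Matrix.diagonal w * A : Matrix (Fin k) (Fin k) ℝ)
      = Matrix.of (fun p => ∑ i : Fin N, (w i * A i p) • (A i)) := by
    ext p q
    rw [Matrix.mul_assoc]
    simp only [Matrix.mul_apply, Matrix.diagonal_mul, Matrix.transpose_apply, Matrix.of_apply,
      Finset.sum_apply, Pi.smul_apply, smul_eq_mul]
    refine Finset.sum_congr rfl fun i _ => ?_
    rw [show ∑ x : Fin N, Matrix.diagonal w i x * A x q = w i * A i q by
      simp [Matrix.diagonal_apply, ite_mul, zero_mul, Finset.sum_ite_eq]]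
    ring
  rw [hrow]
  calc (Matrix.of fun p => ∑ i : Fin N, (w i * A i p) • (A i)).det
      = Matrix.detRowAlternating.toMultilinearMap
          (fun p : Fin k => ∑ i : Fin N, (fun (p : Fin k) (i : Fin N) => (w i * A i p) • (A i)) p i) := rfl
    _ = ∑ r : Fin k → Fin N, Matrix.detRowAlternating.toMultilinearMap
          (fun p : Fin k => (w (r p) * A (r p) p) • (A (r p))) :=
        MultilinearMap.map_sum (f := Matrix.detRowAlternating.toMultilinearMap)
          (fun (p : Fin k) (i : Fin N) => (w i * A i p) • (A i))
    _ = ∑ r : Fin k → Fin N, (∏ p, w (r p) * A (r p) p) * (A.submatrix r id).det := by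
        refine Finset.sum_congr rfl fun r _ => ?_
        rw [show (fun p : Fin k => (w (r p) * A (r p) p) • (A (r p)))
            = (fun p : Fin k => (fun p => w (r p) * A (r p) p) p • (fun p : Fin k => A (r p)) p) from rfl]
        rw [Matrix.detRowAlternating.toMultilinearMap.map_smul_univ]
        rfl

lemma prod_emb {N k : ℕ} (J : Finset (Fin N)) (h : J.card = k) (w : Fin N → ℝ) :
    ∏ p : Fin k, w (J.orderEmbOfFin h p) = ∏ i ∈ J, w i := by
  refine Finset.prod_bij (fun p _ => J.orderEmbOfFin h p) (fun p _ => J.orderEmbOfFin_mem h p)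
    (fun a _ b _ hab => (J.orderEmbOfFin h).injective hab) (fun i hi => ?_) (fun p _ => rfl)
  have : i ∈ Set.range (J.orderEmbOfFin h) := by
    rw [Finset.range_orderEmbOfFin]; exact hi
  obtain ⟨p, hp⟩ := this
  exact ⟨p, Finset.mem_univ p, hp⟩

lemma innerSum {N k : ℕ} (A : Matrix (Fin N) (Fin k) ℝ) (w : Fin N → ℝ)
    (J : Finset (Fin N)) (h : J.card = k) :
    ∑ σ : Equiv.Perm (Fin k),
        (∏ p, w (J.orderEmbOfFin h (σ p)) * A (J.orderEmbOfFin h (σ p)) p)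
          * (A.submatrix (fun p => J.orderEmbOfFin h (σ p)) id).det
      = (∏ i ∈ J, w i) * (A.submatrix (fun p => J.orderEmbOfFin h p) id).det ^ 2 := by
  set C := A.submatrix (fun p => J.orderEmbOfFin h p) id with hCdef
  have hC : ∀ σ : Equiv.Perm (Fin k),
      (A.submatrix (fun p => J.orderEmbOfFin h (σ p)) id) = C.submatrix σ id := fun σ => rfl
  calc ∑ σ : Equiv.Perm (Fin k),
        (∏ p, w (J.orderEmbOfFin h (σ p)) * A (J.orderEmbOfFin h (σ p)) p)
          * (A.submatrix (fun p => J.orderEmbOfFin h (σ p)) id).det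
      = ∑ σ : Equiv.Perm (Fin k),
          (∏ i ∈ J, w i) * ((((Equiv.Perm.sign σ : ℤ) : ℝ) * ∏ p, C (σ p) p) * C.det) := by
        refine Finset.sum_congr rfl fun σ _ => ?_
        rw [hC, Matrix.det_permute, Finset.prod_mul_distrib]
        rw [show (∏ p, w (J.orderEmbOfFin h (σ p))) = ∏ p, w (J.orderEmbOfFin h p) from
          Equiv.prod_comp σ (fun p => w (J.orderEmbOfFin h p))]
        rw [prod_emb]
        have : ∀ p, A (J.orderEmbOfFin h (σ p)) p = C (σ p) p := fun p => rfl
        simp only [this]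
        ring
    _ = (∏ i ∈ J, w i) * C.det ^ 2 := by
        rw [← Finset.mul_sum, ← Finset.sum_mul, ← Matrix.det_apply' C]
        ring

lemma cardJ {N k : ℕ} {r : Fin k → Fin N} (hr : Function.Injective r) :
    (Finset.univ.image r).card = k := by
  rw [Finset.card_image_of_injective _ hr, Finset.card_univ, Fintype.card_fin]

noncomputable def toPerm {N k : ℕ} {r : Fin k → Fin N} (hr : Function.Injective r) :
    Equiv.Perm (Fin k) := by
  refine Equiv.ofBijective
    (fun p => ((Finset.univ.image r).orderIsoOfFin (cardJ hr)).symm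
      ⟨r p, by simp [Finset.mem_image]⟩)
    (Finite.injective_iff_bijective.mp ?_)
  intro a b hab
  have := ((Finset.univ.image r).orderIsoOfFin (cardJ hr)).symm.injective hab
  exact hr (congrArg Subtype.val this)

lemma toPerm_key {N k : ℕ} {r : Fin k → Fin N} (hr : Function.Injective r)
    (h : (Finset.univ.image r).card = k) (p : Fin k) :
    (Finset.univ.image r).orderEmbOfFin h (toPerm hr p) = r p := by
  have : (Finset.univ.image r).orderEmbOfFin h (toPerm hr p)
      = ((Finset.univ.image r).orderIsoOfFin h (toPerm hr p) : Fin N) :=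
    (Finset.coe_orderIsoOfFin_apply _ h _).symm
  rw [this]
  show (((Finset.univ.image r).orderIsoOfFin h)
      (((Finset.univ.image r).orderIsoOfFin (cardJ hr)).symm ⟨r p, _⟩) : Fin N) = r p
  rw [OrderIso.apply_symm_apply]

lemma orderEmbOfFin_congr {N k : ℕ} {J J' : Finset (Fin N)} (hJJ : J = J') (hJ : J.card = k)
    (hJ' : J'.card = k) (p : Fin k) : J.orderEmbOfFin hJ p = J'.orderEmbOfFin hJ' p := by
  subst hJJ; rfl

/-- Weighted Cauchy–Binet. -/
lemma weightedCB {N k : ℕ} (A : Matrix (Fin N) (Fin k) ℝ) (w : Fin N → ℝ) :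
    (Aᵀ * Matrix.diagonal w * A).det
      = ∑ J ∈ (Finset.univ : Finset (Fin N)).powersetCard k,
          (∏ i ∈ J, w i) * (sdet A J) ^ 2 := by
  classical
  rw [stepA]
  rw [← Finset.sum_filter_of_ne
    (p := fun r : Fin k → Fin N => Function.Injective r)
    (f := fun r => (∏ p, w (r p) * A (r p) p) * (A.submatrix r id).det) ?_]
  swap
  · intro r _ hne
    by_contra hinj
    obtain ⟨a, b, hab, hne'⟩ := Function.not_injective_iff.mp hinj
    refine hne ?_
    show (∏ p, w (r p) * A (r p) p) * (A.submatrix r id).det = 0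
    rw [Matrix.det_zero_of_row_eq hne' (funext fun q => by
      simp only [Matrix.submatrix_apply, id_eq, hab])]
    ring
  -- rewrite RHS as a sum over (attached subset, permutation) pairs
  have hcard : ∀ x : {J // J ∈ (Finset.univ : Finset (Fin N)).powersetCard k},
      x.1.card = k := fun x => (Finset.mem_powersetCard.mp x.2).2
  have hRHS : ∑ J ∈ (Finset.univ : Finset (Fin N)).powersetCard k,
        (∏ i ∈ J, w i) * (sdet A J) ^ 2
      = ∑ x ∈ ((Finset.univ : Finset (Fin N)).powersetCard k).attach ×ˢ
            (Finset.univ : Finset (Equiv.Perm (Fin k))),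
          (∏ p, w (x.1.1.orderEmbOfFin (hcard x.1) (x.2 p))
              * A (x.1.1.orderEmbOfFin (hcard x.1) (x.2 p)) p)
            * (A.submatrix (fun p => x.1.1.orderEmbOfFin (hcard x.1) (x.2 p)) id).det := by
    rw [Finset.sum_product]
    rw [← Finset.sum_attach ((Finset.univ : Finset (Fin N)).powersetCard k)
      (fun J => (∏ i ∈ J, w i) * (sdet A J) ^ 2)]
    refine Finset.sum_congr rfl fun x _ => ?_
    rw [show sdet A x.1 = (A.submatrix (fun p => x.1.orderEmbOfFin (hcard x) p) id).det from
      dif_pos (hcard x)]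
    exact (innerSum A w x.1 (hcard x)).symm
  rw [hRHS]
  refine Finset.sum_bij'
    (i := fun r hr => (⟨⟨Finset.univ.image r, ?memJ⟩,
      toPerm ((Finset.mem_filter.mp hr).2)⟩ :
        {J // J ∈ (Finset.univ : Finset (Fin N)).powersetCard k} × Equiv.Perm (Fin k)))
    (j := fun x _ => fun p => x.1.1.orderEmbOfFin (hcard x.1) (x.2 p))
    ?hi ?hj ?left ?right ?h
  case memJ =>
    exact Finset.mem_powersetCard.mpr ⟨Finset.subset_univ _, cardJ ((Finset.mem_filter.mp hr).2)⟩
  case hi =>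
    intro a ha
    exact Finset.mem_product.mpr ⟨Finset.mem_attach _ _, Finset.mem_univ _⟩
  case hj =>
    intro x hx
    refine Finset.mem_filter.mpr ⟨Finset.mem_univ _, ?_⟩
    intro a b hab
    exact x.2.injective ((x.1.1.orderEmbOfFin (hcard x.1)).injective hab)
  case left =>
    intro r hr
    funext p
    exact toPerm_key (Finset.mem_filter.mp hr).2 _ p
  case right =>
    intro x hx
    set J := x.1.1 with hJ
    set σ := x.2 with hσ
    set r : Fin k → Fin N := fun p => J.orderEmbOfFin (hcard x.1) (σ p) with hr
    have hrinj : Function.Injective r := fun a b hab =>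
      σ.injective ((J.orderEmbOfFin (hcard x.1)).injective hab)
    have h1 : Finset.univ.image r = J := by
      ext i
      simp only [Finset.mem_image, Finset.mem_univ, true_and]
      constructor
      · rintro ⟨p, rfl⟩; exact J.orderEmbOfFin_mem (hcard x.1) (σ p)
      · intro hi
        have : i ∈ Set.range (J.orderEmbOfFin (hcard x.1)) := by
          rw [Finset.range_orderEmbOfFin]; exact hi
        obtain ⟨q, hq⟩ := this
        exact ⟨σ.symm q, by simp [hr, hq]⟩
    refine Prod.ext (Subtype.ext h1) ?_
    show toPerm hrinj = σ
    refine Equiv.ext fun p => ?_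
    have h2 : (Finset.univ.image r).orderEmbOfFin (cardJ hrinj) (toPerm hrinj p) = r p :=
      toPerm_key hrinj _ p
    have h3 : (Finset.univ.image r).orderEmbOfFin (cardJ hrinj) (σ p) = r p := by
      rw [orderEmbOfFin_congr h1 (cardJ hrinj) (hcard x.1) (σ p)]
    exact ((Finset.univ.image r).orderEmbOfFin (cardJ hrinj)).injective (by rw [h2, h3])
  case h =>
    intro r hr
    have key := toPerm_key (Finset.mem_filter.mp hr).2
      (cardJ (Finset.mem_filter.mp hr).2)
    simp only [key]

/-- Unnormalized singleton marginal of the `k`-DPP with kernel `Q = A Aᵀ`: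
`∑_{|J| = k, j ∈ J} det(Q_J) = det(AᵀA) ⋅ [A (AᵀA)⁻¹ Aᵀ]_{jj}`, i.e. the singleton marginal
equals the `j`-th diagonal entry of the projection onto the column space of `A`. -/
theorem kdpp_singleton_marginal (N k : ℕ) (A : Matrix (Fin N) (Fin k) ℝ)
    (hA : IsUnit (Aᵀ * A).det) (j : Fin N) :
    ∑ J ∈ ((Finset.univ : Finset (Fin N)).powersetCard k).filter (fun J => j ∈ J),
        pdet (A * Aᵀ) J
      = (Aᵀ * A).det * (A * (Aᵀ * A)⁻¹ * Aᵀ) j j := by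
  -- principal minors of A*Aᵀ are squares of row-minors of A
  have hpdet : ∀ J ∈ ((Finset.univ : Finset (Fin N)).powersetCard k).filter (fun J => j ∈ J),
      pdet (A * Aᵀ) J = (sdet A J) ^ 2 := by
    intro J hJ
    have hk : J.card = k := (Finset.mem_powersetCard.mp (Finset.mem_filter.mp hJ).1).2
    have h1 : pdet (A * Aᵀ) J
        = ((A * Aᵀ).submatrix (fun i : J => (i : Fin N)) (fun i : J => (i : Fin N))).det := rfl
    rw [h1, ← Matrix.det_submatrix_equiv_self (J.orderIsoOfFin hk).toEquiv]
    have h2 : (((A * Aᵀ).submatrix (fun i : J => (i : Fin N))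
            (fun i : J => (i : Fin N))).submatrix (J.orderIsoOfFin hk).toEquiv
              (J.orderIsoOfFin hk).toEquiv)
        = (A.submatrix (fun p => J.orderEmbOfFin hk p) id)
          * (A.submatrix (fun p => J.orderEmbOfFin hk p) id)ᵀ := by
      ext p q
      simp only [Matrix.submatrix_apply, Matrix.mul_apply, Matrix.transpose_apply, id_eq]
      exact Finset.sum_congr rfl fun c _ => by
        rw [show ((J.orderIsoOfFin hk).toEquiv p : Fin N) = J.orderEmbOfFin hk p from
            Finset.coe_orderIsoOfFin_apply J hk p,
          show ((J.orderIsoOfFin hk).toEquiv q : Fin N) = J.orderEmbOfFin hk q from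
            Finset.coe_orderIsoOfFin_apply J hk q]
    rw [h2, Matrix.det_mul, Matrix.det_transpose, sdet, dif_pos hk]
    ring
  -- base Cauchy–Binet
  have base := weightedCB A (fun _ => (1 : ℝ))
  rw [show Matrix.diagonal (fun _ : Fin N => (1:ℝ)) = 1 from Matrix.diagonal_one,
    Matrix.mul_one] at base
  simp only [Finset.prod_const_one, one_mul] at base
  -- perturbed Cauchy–Binet
  set w2 : Fin N → ℝ := fun i => if i = j then (2:ℝ) else 1 with hw2def
  have w2CB := weightedCB A w2
  have hw2M : Aᵀ * Matrix.diagonal w2 * A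
      = Aᵀ * A + Matrix.replicateCol Unit (A j) * Matrix.replicateRow Unit (A j) := by
    ext p q
    rw [Matrix.mul_assoc]
    rw [show (Aᵀ * (Matrix.diagonal w2 * A)) p q = ∑ i : Fin N, A i p * (w2 i * A i q) from by
      rw [Matrix.mul_apply]
      exact Finset.sum_congr rfl fun i _ => by
        rw [Matrix.diagonal_mul, Matrix.transpose_apply]]
    simp only [Matrix.add_apply, Matrix.mul_apply, Matrix.replicateCol_apply, Matrix.replicateRow_apply,
      Matrix.transpose_apply, Fintype.sum_unique]
    rw [show ∑ i : Fin N, A i p * (w2 i * A i q)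
        = ∑ i : Fin N, (A i p * A i q + if i = j then A i p * A i q else 0) from
      Finset.sum_congr rfl fun i _ => by by_cases h : i = j <;> simp [hw2def, h] <;> ring]
    rw [Finset.sum_add_distrib, Finset.sum_ite_eq' Finset.univ j
      (fun i => A i p * A i q)]
    simp
  have hdet2 : (Aᵀ * A + Matrix.replicateCol Unit (A j) * Matrix.replicateRow Unit (A j)).det
      = (Aᵀ * A).det * (1 + (A * (Aᵀ * A)⁻¹ * Aᵀ) j j) := by
    rw [Matrix.det_add_replicateCol_mul_replicateRow hA]
    congr 1
    rw [Matrix.det_unique]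
    simp only [Matrix.add_apply, Matrix.one_apply_eq]
    congr 1
  -- compute the weighted sum
  have hsum : ∑ J ∈ (Finset.univ : Finset (Fin N)).powersetCard k,
        (∏ i ∈ J, w2 i) * (sdet A J) ^ 2
      = (∑ J ∈ (Finset.univ : Finset (Fin N)).powersetCard k, (sdet A J) ^ 2)
        + ∑ J ∈ ((Finset.univ : Finset (Fin N)).powersetCard k).filter (fun J => j ∈ J),
            (sdet A J) ^ 2 := by
    rw [Finset.sum_filter]
    rw [← Finset.sum_add_distrib]
    refine Finset.sum_congr rfl fun J _ => ?_
    rw [show (∏ i ∈ J, w2 i) = if j ∈ J then 2 else 1 from Finset.prod_ite_eq' J j (fun _ => 2)]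
    by_cases h : j ∈ J <;> simp [h] <;> ring
  rw [Finset.sum_congr rfl hpdet]
  have := w2CB
  rw [hw2M, hdet2, hsum, ← base] at this
  linarith
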